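/- arXiv:2310.04884 — 2 statements merged into one kernel-verified Lean document; each statement's English description precedes it below -/
import Mathlib

section
/- Let K ≥ 1 be an integer, let τ* ∈ [0,1], let C1 > 0, and let Δ : {1,…,K} → ℝ satisfy Δ_i ≥ C1·(τ* − i/K)² for every i ∈ {1,…,K}. Then the sum over all indices i ∈ {1,…,K} with |τ* − i/K| > 1/(2K) of 1/Δ_i is at most 7K²/C1. -/
lemma sum_inv_shift_sq (c : ℝ) (hc0 : 0 ≤ c) (hc : c ≤ 1/2) (K : ℕ) (hK : 1 ≤ K) :
    ∑ k ∈ Finset.Icc 1 K, 1/((k:ℝ)-c)^2 ≤ 1/(1-c)^2 + 1 - 1/K := by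
  induction K with
  | zero => omega
  | succ K ih =>
    by_cases hK0 : K = 0
    · subst hK0
      norm_num [Finset.Icc_self]
    · have hK1 : 1 ≤ K := Nat.one_le_iff_ne_zero.mpr hK0
      have hKpos : (0:ℝ) < K := by exact_mod_cast Nat.pos_of_ne_zero hK0
      rw [Finset.sum_Icc_succ_top (by omega : 1 ≤ K + 1)]
      have key : 1/(((K:ℝ)+1)-c)^2 ≤ 1/(K:ℝ) - 1/((K:ℝ)+1) := by
        rw [div_sub_div _ _ (ne_of_gt hKpos) (by linarith : (K:ℝ)+1 ≠ 0)]
        rw [div_le_div_iff₀ (pow_pos (by linarith : (0:ℝ) < (K:ℝ)+1-c) 2) (by positivity)]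
        nlinarith [mul_nonneg hKpos.le (by linarith : (0:ℝ) ≤ 1 - 2*c), sq_nonneg (1-c)]
      have ih' := ih hK1
      push_cast
      push_cast at ih'
      linarith

lemma sum_inv_sq_le_two (K : ℕ) (hK : 1 ≤ K) :
    ∑ k ∈ Finset.Icc 1 K, 1/((k:ℝ)-0)^2 ≤ 2 := by
  have h := sum_inv_shift_sq 0 le_rfl (by norm_num) K hK
  have hKpos : (0:ℝ) < K := by exact_mod_cast hK
  have : (0:ℝ) < 1/(K:ℝ) := by positivity
  refine h.trans ?_
  have hpos : 0 < ((K:ℝ))⁻¹ := by positivity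
  norm_num

lemma sum_inv_sq_le_five (K : ℕ) (hK : 1 ≤ K) :
    ∑ k ∈ Finset.Icc 1 K, 1/((k:ℝ)-1/2)^2 ≤ 5 := by
  have h := sum_inv_shift_sq (1/2) (by norm_num) le_rfl K hK
  have hKpos : (0:ℝ) < K := by exact_mod_cast hK
  have : (0:ℝ) < 1/(K:ℝ) := by positivity
  refine h.trans ?_
  have hpos : 0 < ((K:ℝ))⁻¹ := by positivity
  norm_num

lemma sum_le_shift (S : Finset ℕ) (K : ℕ) (g : ℕ → ℝ) (σ : ℕ → ℕ) (c : ℝ)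
    (hinj : ∀ i ∈ S, ∀ j ∈ S, σ i = σ j → i = j)
    (hmem : ∀ i ∈ S, σ i ∈ Finset.Icc 1 K)
    (hle : ∀ i ∈ S, g i ≤ 1 / ((σ i : ℝ) - c)^2) :
    ∑ i ∈ S, g i ≤ ∑ k ∈ Finset.Icc 1 K, 1 / ((k:ℝ) - c)^2 := by
  calc ∑ i ∈ S, g i ≤ ∑ i ∈ S, 1/((σ i : ℝ) - c)^2 := Finset.sum_le_sum hle
    _ = ∑ k ∈ S.image σ, 1/((k:ℝ)-c)^2 := (Finset.sum_image (f := fun k : ℕ => 1/((k:ℝ)-c)^2) (g := σ) hinj).symm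
    _ ≤ ∑ k ∈ Finset.Icc 1 K, 1/((k:ℝ)-c)^2 :=
        Finset.sum_le_sum_of_subset_of_nonneg (Finset.image_subset_iff.mpr hmem)
          (fun k _ _ => by positivity)

set_option maxHeartbeats 1000000

open Classical in
/-- Inverse-gap-sum lemma: if the suboptimality gaps satisfy
`Δ i ≥ C1 (τ* − i/K)²` on the grid `{i/K : i = 1,…,K}`, then the sum of
`1/Δ i` over the grid points at distance more than `1/(2K)` from `τ*` is at
most `7K²/C1`. -/
theorem inverse_gap_sum
    (K : ℕ) (hK : 1 ≤ K) (τs : ℝ) (hτs : τs ∈ Set.Icc (0 : ℝ) 1)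
    (C1 : ℝ) (hC1 : 0 < C1) (Δ : ℕ → ℝ)
    (hΔ : ∀ i : ℕ, i ∈ Finset.Icc 1 K → C1 * (τs - (i : ℝ) / (K : ℝ)) ^ 2 ≤ Δ i) :
    Finset.sum
        ((Finset.Icc 1 K).filter
          (fun i : ℕ => 1 / (2 * (K : ℝ)) < |τs - (i : ℝ) / (K : ℝ)|))
        (fun i : ℕ => 1 / Δ i) ≤ 7 * (K : ℝ) ^ 2 / C1 := by
  have hK0 : (0:ℝ) < K := by exact_mod_cast hK
  set x : ℝ := K * τs with hx
  have hxi : ∀ i : ℕ, τs - (i:ℝ)/K = (x - i)/K := by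
    intro i; field_simp; rw [hx]; ring
  have hpred : ∀ i ∈ Finset.Icc 1 K,
      (1 / (2 * (K:ℝ)) < |τs - (i:ℝ) / K|) ↔ (1/2 < |x - (i:ℝ)|) := by
    intro i _
    rw [hxi i, abs_div, abs_of_pos hK0, div_lt_div_iff₀ (by positivity) hK0]
    constructor <;> intro h <;> nlinarith [abs_nonneg (x - (i:ℝ))]
  rw [Finset.filter_congr hpred]
  -- split into two halves
  have habs : ∀ i : ℕ, (1/2 < |x - (i:ℝ)|) ↔
      (1/2 < x - (i:ℝ) ∨ 1/2 < (i:ℝ) - x) := by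
    intro i
    rw [lt_abs]
    constructor
    · rintro (h | h)
      · exact Or.inl h
      · exact Or.inr (by linarith)
    · rintro (h | h)
      · exact Or.inl h
      · exact Or.inr (by linarith)
  rw [Finset.filter_congr (fun i _ => habs i), Finset.filter_or]
  set A := (Finset.Icc 1 K).filter (fun i : ℕ => 1/2 < x - (i:ℝ)) with hA
  set B := (Finset.Icc 1 K).filter (fun i : ℕ => 1/2 < (i:ℝ) - x) with hB
  have hdisj : Disjoint A B := by
    rw [Finset.disjoint_left]
    intro i hiA hiB
    rw [hA, Finset.mem_filter] at hiA
    rw [hB, Finset.mem_filter] at hiB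
    linarith [hiA.2, hiB.2]
  -- pointwise bound on A ∪ B
  have hpt : ∀ i ∈ A ∪ B, 1 / Δ i ≤ (K:ℝ)^2/C1 * (1/(x - (i:ℝ))^2) := by
    intro i hi
    have hi' : i ∈ Finset.Icc 1 K ∧ 1/2 < |x - (i:ℝ)| := by
      rcases Finset.mem_union.mp hi with h | h
      · rw [hA, Finset.mem_filter] at h
        exact ⟨h.1, by rw [lt_abs]; exact Or.inl h.2⟩
      · rw [hB, Finset.mem_filter] at h
        exact ⟨h.1, by rw [lt_abs]; exact Or.inr (by linarith [h.2])⟩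
    have hsq : 0 < (x - (i:ℝ))^2 := by
      nlinarith [hi'.2, sq_abs (x - (i:ℝ)), abs_nonneg (x - (i:ℝ))]
    have hΔ' := hΔ i hi'.1
    rw [hxi i, div_pow] at hΔ'
    have h2 : (0:ℝ) < C1 * ((x - (i:ℝ))^2 / (K:ℝ)^2) :=
      mul_pos hC1 (div_pos hsq (by positivity))
    have h3 : 1 / Δ i ≤ 1 / (C1 * ((x - (i:ℝ))^2 / (K:ℝ)^2)) :=
      one_div_le_one_div_of_le h2 (by linarith [hΔ'])
    refine h3.trans (le_of_eq ?_)
    field_simp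
  -- core bound: sum of 1/(x-i)^2 over A ∪ B is at most 7
  have hxnn : (0:ℝ) ≤ x := mul_nonneg hK0.le hτs.1
  have hxK : x ≤ (K:ℝ) := by nlinarith [hτs.2]
  set n := ⌊x⌋₊ with hn
  have hn1 : (n:ℝ) ≤ x := Nat.floor_le hxnn
  have hn2 : x < (n:ℝ) + 1 := Nat.lt_floor_add_one x
  have hnK : n ≤ K := by exact_mod_cast hn1.trans hxK
  have memA : ∀ i ∈ A, 1 ≤ i ∧ i ≤ K ∧ 1/2 < x - (i:ℝ) := by
    intro i hi
    rw [hA, Finset.mem_filter, Finset.mem_Icc] at hi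
    exact ⟨hi.1.1, hi.1.2, hi.2⟩
  have memB : ∀ i ∈ B, 1 ≤ i ∧ i ≤ K ∧ 1/2 < (i:ℝ) - x := by
    intro i hi
    rw [hB, Finset.mem_filter, Finset.mem_Icc] at hi
    exact ⟨hi.1.1, hi.1.2, hi.2⟩
  have hsum7 : ∑ i ∈ A ∪ B, 1/(x - (i:ℝ))^2 ≤ 7 := by
    rw [Finset.sum_union hdisj]
    by_cases hf : x ≤ (n:ℝ) + 1/2
    · -- fractional part at most 1/2
      have hAlt : ∀ i ∈ A, i < n := by
        intro i hi
        have h := (memA i hi).2.2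
        have : (i:ℝ) < (n:ℝ) := by linarith
        exact_mod_cast this
      have hA2 : ∑ i ∈ A, 1/(x - (i:ℝ))^2 ≤ ∑ k ∈ Finset.Icc 1 K, 1/((k:ℝ)-0)^2 := by
        apply sum_le_shift A K _ (fun i => n - i) 0
        · intro i hi j hj hij
          have := hAlt i hi; have := hAlt j hj; omega
        · intro i hi
          have h1 := (memA i hi).1
          have := hAlt i hi
          rw [Finset.mem_Icc]; omega
        · intro i hi
          have hlt := hAlt i hi
          have hmm := (memA i hi).2.2
          have hcast : ((n - i : ℕ):ℝ) = (n:ℝ) - (i:ℝ) := by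
            rw [Nat.cast_sub hlt.le]
          have h1n : (1:ℝ) ≤ (n:ℝ) - (i:ℝ) := by
            have : (1:ℝ) ≤ ((n - i : ℕ):ℝ) := by exact_mod_cast Nat.one_le_iff_ne_zero.mpr (by omega)
            linarith [hcast ▸ this]
          apply one_div_le_one_div_of_le
          · rw [hcast]; nlinarith
          · rw [hcast]
            apply pow_le_pow_left₀ (by linarith) (by linarith)
      have hB5 : ∑ i ∈ B, 1/(x - (i:ℝ))^2 ≤ ∑ k ∈ Finset.Icc 1 K, 1/((k:ℝ)-1/2)^2 := by
        apply sum_le_shift B K _ (fun i => i - n) (1/2)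
        · intro i hi j hj hij
          have hi1 := (memB i hi).2.2; have hj1 := (memB j hj).2.2
          have : (n:ℝ) < (i:ℝ) := by linarith
          have hin : n < i := by exact_mod_cast this
          have : (n:ℝ) < (j:ℝ) := by linarith
          have hjn : n < j := by exact_mod_cast this
          omega
        · intro i hi
          obtain ⟨h1, h2, h3⟩ := memB i hi
          have : (n:ℝ) < (i:ℝ) := by linarith
          have hin : n < i := by exact_mod_cast this
          rw [Finset.mem_Icc]; omega
        · intro i hi
          obtain ⟨h1, h2, h3⟩ := memB i hi
          have : (n:ℝ) < (i:ℝ) := by linarith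
          have hin : n < i := by exact_mod_cast this
          have hcast : ((i - n : ℕ):ℝ) = (i:ℝ) - (n:ℝ) := by
            rw [Nat.cast_sub hin.le]
          have h1n : (1:ℝ) ≤ (i:ℝ) - (n:ℝ) := by
            have : (1:ℝ) ≤ ((i - n : ℕ):ℝ) := by exact_mod_cast Nat.one_le_iff_ne_zero.mpr (by omega)
            linarith [hcast ▸ this]
          rw [show (x - (i:ℝ))^2 = ((i:ℝ) - x)^2 by ring]
          apply one_div_le_one_div_of_le
          · rw [hcast]; nlinarith
          · rw [hcast]
            apply pow_le_pow_left₀ (by linarith) (by linarith)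
      have := sum_inv_sq_le_two K hK
      have := sum_inv_sq_le_five K hK
      linarith
    · -- fractional part more than 1/2
      push_neg at hf
      have hAlt : ∀ i ∈ A, i < n + 1 := by
        intro i hi
        have h := (memA i hi).2.2
        have : (i:ℝ) < (n:ℝ) + 1 := by linarith
        exact_mod_cast this
      have hA5 : ∑ i ∈ A, 1/(x - (i:ℝ))^2 ≤ ∑ k ∈ Finset.Icc 1 K, 1/((k:ℝ)-1/2)^2 := by
        apply sum_le_shift A K _ (fun i => n + 1 - i) (1/2)
        · intro i hi j hj hij
          have := hAlt i hi; have := hAlt j hj; omega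
        · intro i hi
          have h1 := (memA i hi).1
          have := hAlt i hi
          rw [Finset.mem_Icc]; omega
        · intro i hi
          have hlt := hAlt i hi
          have hmm := (memA i hi).2.2
          have hcast : ((n + 1 - i : ℕ):ℝ) = (n:ℝ) + 1 - (i:ℝ) := by
            rw [Nat.cast_sub (by omega : i ≤ n + 1)]; push_cast; ring
          have h1n : (1:ℝ) ≤ (n:ℝ) + 1 - (i:ℝ) := by
            have : (1:ℝ) ≤ ((n + 1 - i : ℕ):ℝ) := by exact_mod_cast Nat.one_le_iff_ne_zero.mpr (by omega)
            linarith [hcast ▸ this]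
          apply one_div_le_one_div_of_le
          · rw [hcast]; nlinarith
          · rw [hcast]
            apply pow_le_pow_left₀ (by linarith) (by linarith)
      have hB2 : ∑ i ∈ B, 1/(x - (i:ℝ))^2 ≤ ∑ k ∈ Finset.Icc 1 K, 1/((k:ℝ)-0)^2 := by
        apply sum_le_shift B K _ (fun i => i - (n + 1)) 0
        · intro i hi j hj hij
          have hi1 := (memB i hi).2.2; have hj1 := (memB j hj).2.2
          have : (n:ℝ) + 1 < (i:ℝ) := by linarith
          have hin : n + 1 < i := by exact_mod_cast this
          have : (n:ℝ) + 1 < (j:ℝ) := by linarith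
          have hjn : n + 1 < j := by exact_mod_cast this
          omega
        · intro i hi
          obtain ⟨h1, h2, h3⟩ := memB i hi
          have : (n:ℝ) + 1 < (i:ℝ) := by linarith
          have hin : n + 1 < i := by exact_mod_cast this
          rw [Finset.mem_Icc]; omega
        · intro i hi
          obtain ⟨h1, h2, h3⟩ := memB i hi
          have : (n:ℝ) + 1 < (i:ℝ) := by linarith
          have hin : n + 1 < i := by exact_mod_cast this
          have hcast : ((i - (n + 1) : ℕ):ℝ) = (i:ℝ) - ((n:ℝ) + 1) := by
            rw [Nat.cast_sub hin.le]; push_cast; ring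
          have h1n : (1:ℝ) ≤ (i:ℝ) - ((n:ℝ) + 1) := by
            have : (1:ℝ) ≤ ((i - (n + 1) : ℕ):ℝ) := by exact_mod_cast Nat.one_le_iff_ne_zero.mpr (by omega)
            linarith [hcast ▸ this]
          rw [show (x - (i:ℝ))^2 = ((i:ℝ) - x)^2 by ring]
          apply one_div_le_one_div_of_le
          · rw [hcast]; nlinarith
          · rw [hcast]
            apply pow_le_pow_left₀ (by linarith) (by linarith)
      have := sum_inv_sq_le_two K hK
      have := sum_inv_sq_le_five K hK
      linarith
  calc ∑ i ∈ A ∪ B, 1 / Δ i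
      ≤ ∑ i ∈ A ∪ B, (K:ℝ)^2/C1 * (1/(x - (i:ℝ))^2) := Finset.sum_le_sum hpt
    _ = (K:ℝ)^2/C1 * ∑ i ∈ A ∪ B, 1/(x - (i:ℝ))^2 := by rw [Finset.mul_sum]
    _ ≤ (K:ℝ)^2/C1 * 7 :=
        mul_le_mul_of_nonneg_left hsum7 (by positivity)
    _ = 7 * (K:ℝ)^2 / C1 := by ring
end

section
/- Let A be a nonempty finite set, let X, Y : A → ℝ, and let L1 > 0 satisfy L1·|X(a) − X(b)| ≤ |Y(a) − Y(b)| for all a, b ∈ A. Let ymin > 0 with Y(a) ≥ ymin for all a ∈ A, and let ε satisfy 0 ≤ ε < ymin. Fix τ ∈ ℝ and let S = {a ∈ A : X(a) ≥ τ}. Suppose a* ∈ A is an ε-best response, i.e., for every b ∈ A, (if X(a*) ≥ τ then Y(a*) else 0) ≥ (if X(b) ≥ τ then Y(b) else 0) − ε. Then: (i) if S is nonempty then a* ∈ S; and (ii) for every b ∈ S with Y(b) = max_{c ∈ S} Y(c), one has |X(a*) − X(b)| ≤ ε/L1. -/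
/-- Perturbation-interval lemma for the stochastic strategic setting: under
stochastic Lipschitz continuity `L1 |X a − X b| ≤ |Y a − Y b|` and a minimum
agent utility `ymin > ε ≥ 0`, an `ε`-best-responding agent `a*` against the
eligible set `{a : X a ≥ τ}` proposes an eligible solution whenever one
exists, and its principal utility is within `ε/L1` of that of any exact best
response `b`. -/
theorem perturbation_interval
    {A : Type*} [Fintype A] [Nonempty A]
    (X Y : A → ℝ) (L1 : ℝ) (hL1 : 0 < L1)
    (hLip : ∀ a b : A, L1 * |X a - X b| ≤ |Y a - Y b|)
    (ymin : ℝ) (hymin : 0 < ymin) (hY : ∀ a, ymin ≤ Y a)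
    (ε : ℝ) (hε0 : 0 ≤ ε) (hεy : ε < ymin)
    (τ : ℝ) (astar : A)
    (hbr : ∀ b : A,
      (if τ ≤ X b then Y b else 0) - ε ≤ (if τ ≤ X astar then Y astar else 0)) :
    ((∃ a, τ ≤ X a) → τ ≤ X astar) ∧
    (∀ b : A, τ ≤ X b → (∀ c : A, τ ≤ X c → Y c ≤ Y b) →
      |X astar - X b| ≤ ε / L1) := by
  have hel : (∃ a, τ ≤ X a) → τ ≤ X astar := by
    rintro ⟨a, ha⟩
    by_contra h
    have := hbr a
    simp [ha, if_neg h] at this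
    have := lt_of_lt_of_le hεy (hY a)
    linarith
  refine ⟨hel, fun b hb hmax => ?_⟩
  have hast : τ ≤ X astar := hel ⟨b, hb⟩
  have h1 : Y b - ε ≤ Y astar := by
    have := hbr b; simp [hb, hast] at this; linarith
  have h2 : Y astar ≤ Y b := hmax astar hast
  have habs : |Y astar - Y b| ≤ ε := abs_le.2 ⟨by linarith, by linarith⟩
  have := (hLip astar b).trans habs
  rw [le_div_iff₀ hL1]
  linarith
end
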